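/- arXiv:2307.11451 — 3 statements merged into one kernel-verified Lean document; each statement's English description precedes it below -/
import Mathlib

section
/- Let V be an n-dimensional real inner product space, 0 ≤ σ, and let X₁,…,Xₙ be vectors with |⟨Xᵢ, Xⱼ⟩ − δᵢⱼ| ≤ σ for all i, j. If σ·n < 1/2, then for every linear map A : V → V one has |tr(A) − Σᵢ ⟨A Xᵢ, Xᵢ⟩| ≤ 4n² σ ‖A‖, where ‖A‖ is the operator norm. -/
open scoped RealInnerProductSpace

/-- If `X₁, …, Xₙ` is a `σ`-orthonormal basis of an `n`-dimensional real inner product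
space with `σ·n < 1/2`, then for every (continuous) linear map `A : V → V` one has
`|tr A − Σᵢ ⟨A Xᵢ, Xᵢ⟩| ≤ 4 n² σ ‖A‖`. -/
theorem stmt_1 {V : Type*} [NormedAddCommGroup V] [InnerProductSpace ℝ V]
    [FiniteDimensional ℝ V] (n : ℕ) (hn : Module.finrank ℝ V = n)
    (σ : ℝ) (hσ0 : 0 ≤ σ) (X : Fin n → V)
    (hX : ∀ i j : Fin n, |⟪X i, X j⟫ - (if i = j then (1 : ℝ) else 0)| ≤ σ)
    (hσn : σ * n < 1 / 2) (A : V →L[ℝ] V) :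
    |LinearMap.trace ℝ V A.toLinearMap - ∑ i : Fin n, ⟪A (X i), X i⟫|
      ≤ 4 * (n : ℝ) ^ 2 * σ * ‖A‖ := by
  rcases Nat.eq_zero_or_pos n with h0 | hpos
  · subst h0
    have hs : Subsingleton V := by
      rw [← Module.finrank_zero_iff (R := ℝ)]; exact hn
    have : A.toLinearMap = 0 := Subsingleton.elim _ _
    simp [this]
  have hn1 : 1 ≤ (n : ℝ) := by exact_mod_cast hpos
  have hσhalf : σ * n ≤ 1 / 2 := hσn.le
  -- linear independence
  have li : LinearIndependent ℝ X := by
    rw [Fintype.linearIndependent_iff]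
    intro g hg
    by_contra hne
    push_neg at hne
    obtain ⟨j0, hj0⟩ := hne
    obtain ⟨j, -, hj⟩ := Finset.exists_max_image Finset.univ (fun i => |g i|)
      ⟨j0, Finset.mem_univ _⟩
    have hj0' : 0 < |g j| := lt_of_lt_of_le (abs_pos.mpr hj0) (hj j0 (Finset.mem_univ _))
    have hsum : ∑ i, g i * ⟪X i, X j⟫ = 0 := by
      have := congrArg (fun v => ⟪v, X j⟫) hg
      simpa [sum_inner, real_inner_smul_left] using this
    have hgj : g j = ∑ i, g i * ((if i = j then (1:ℝ) else 0) - ⟪X i, X j⟫) := by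
      simp [mul_sub, Finset.sum_sub_distrib, hsum, Finset.sum_ite_eq']
    have hle : |g j| ≤ σ * n * |g j| := by
      calc |g j| ≤ ∑ i, |g i * ((if i = j then (1:ℝ) else 0) - ⟪X i, X j⟫)| := by
            rw [hgj]; exact Finset.abs_sum_le_sum_abs _ _
        _ ≤ ∑ _i : Fin n, |g j| * σ := by
            apply Finset.sum_le_sum
            intro i _
            rw [abs_mul]
            have h1 : |(if i = j then (1:ℝ) else 0) - ⟪X i, X j⟫| ≤ σ := by
              rw [abs_sub_comm]; exact hX i j
            exact mul_le_mul (hj i (Finset.mem_univ _)) h1 (abs_nonneg _) (abs_nonneg _)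
        _ = σ * n * |g j| := by simp [Finset.sum_const]; ring
    nlinarith
  have hcard : Fintype.card (Fin n) = Module.finrank ℝ V := by simp [hn]
  haveI : Nonempty (Fin n) := ⟨⟨0, hpos⟩⟩
  set b := basisOfLinearIndependentOfCardEqFinrank li hcard with hbdef
  have hb : ∀ i, b i = X i := fun i => by
    rw [hbdef, coe_basisOfLinearIndependentOfCardEqFinrank]
  set Y : Fin n → V := fun i =>
    (InnerProductSpace.toDual ℝ V).symm (LinearMap.toContinuousLinearMap (b.coord i)) with hYdef
  have hY : ∀ i (v : V), ⟪Y i, v⟫ = b.repr v i := by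
    intro i v
    rw [hYdef]
    simp [InnerProductSpace.toDual_symm_apply, Module.Basis.coord_apply]
  have hYX : ∀ i j, ⟪Y i, X j⟫ = if j = i then (1:ℝ) else 0 := by
    intro i j
    rw [hY, ← hb, b.repr_self_apply]
  -- trace formula
  have htr : LinearMap.trace ℝ V A.toLinearMap = ∑ i, ⟪A (X i), Y i⟫ := by
    rw [LinearMap.trace_eq_matrix_trace ℝ b, Matrix.trace]
    apply Finset.sum_congr rfl
    intro i _
    rw [Matrix.diag_apply, LinearMap.toMatrix_apply, hb, ← hY, real_inner_comm]
    rfl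
  -- expansion lemma
  have hexp : ∀ v : V, v = ∑ j, ⟪v, X j⟫ • Y j := by
    intro v
    have horth : ∀ z : V, (∀ k, ⟪z, X k⟫ = 0) → z = 0 := by
      intro z hz
      have hz2 : ⟪z, z⟫ = 0 := by
        nth_rewrite 2 [← b.sum_repr z]
        rw [inner_sum]
        apply Finset.sum_eq_zero
        intro k _
        rw [real_inner_smul_right, hb, hz, mul_zero]
      exact inner_self_eq_zero.mp hz2
    have key : ∀ k, ⟪v - ∑ j, ⟪v, X j⟫ • Y j, X k⟫ = 0 := by
      intro k
      rw [inner_sub_left, sum_inner]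
      simp only [real_inner_smul_left, hYX, mul_ite, mul_one, mul_zero,
        Finset.sum_ite_eq, Finset.mem_univ, if_true, sub_self]
    exact sub_eq_zero.mp (horth _ key)
  -- norm bounds
  have hσ1 : σ ≤ 1 / 2 := le_trans (le_mul_of_one_le_right hσ0 hn1) hσhalf
  have hXnorm : ∀ i, ‖X i‖ ≤ 5 / 4 := by
    intro i
    have h1 := hX i i
    simp only [if_pos rfl, if_true] at h1
    have h2 : ‖X i‖ ^ 2 ≤ 1 + σ := by
      rw [← real_inner_self_eq_norm_sq]
      have := (abs_le.mp h1).2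
      linarith
    nlinarith [norm_nonneg (X i)]
  set w : Fin n → V := fun i => Y i - X i with hwdef
  have hwcoef : ∀ i j, |⟪w i, X j⟫| ≤ σ := by
    intro i j
    rw [hwdef]
    simp only [inner_sub_left, hYX]
    have : (if j = i then (1:ℝ) else 0) = (if i = j then (1:ℝ) else 0) := by
      by_cases h : i = j <;> simp [h, eq_comm]
    rw [this, abs_sub_comm]
    exact hX i j
  set MY : ℝ := Finset.univ.sup' Finset.univ_nonempty (fun i => ‖Y i‖) with hMYdef
  have hMYge : ∀ i, ‖Y i‖ ≤ MY := by
    intro i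
    rw [hMYdef]
    exact Finset.le_sup' (fun j => ‖Y j‖) (Finset.mem_univ i)
  have hMY0 : 0 ≤ MY := le_trans (norm_nonneg _) (hMYge ⟨0, hpos⟩)
  have hwnorm : ∀ i, ‖w i‖ ≤ σ * n * MY := by
    intro i
    calc ‖w i‖ = ‖∑ j, ⟪w i, X j⟫ • Y j‖ := by rw [← hexp (w i)]
      _ ≤ ∑ j, ‖⟪w i, X j⟫ • Y j‖ := norm_sum_le _ _
      _ ≤ ∑ _j : Fin n, σ * MY := by
          apply Finset.sum_le_sum
          intro j _
          rw [norm_smul, Real.norm_eq_abs]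
          exact mul_le_mul (hwcoef i j) (hMYge j) (norm_nonneg _) hσ0
      _ = σ * n * MY := by simp [Finset.sum_const]; ring
  have hMY : MY ≤ 5 / 2 := by
    obtain ⟨i, -, hi⟩ := Finset.exists_mem_eq_sup' Finset.univ_nonempty (fun i => ‖Y i‖)
    have hYi : Y i = X i + w i := by simp [hwdef]
    have h1 : ‖Y i‖ ≤ ‖X i‖ + ‖w i‖ := by rw [hYi]; exact norm_add_le _ _
    have h2 : σ * n * MY ≤ (1 / 2) * MY :=
      mul_le_mul_of_nonneg_right hσhalf hMY0
    have := hwnorm i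
    have := hXnorm i
    rw [hMYdef, ← hi] at *
    linarith [hi ▸ h1]
  have hwfin : ∀ i, ‖w i‖ ≤ σ * n * (5 / 2) := by
    intro i
    exact le_trans (hwnorm i) (by
      apply mul_le_mul_of_nonneg_left hMY
      positivity)
  -- final estimate
  rw [htr]
  have hsplit : ∑ i, ⟪A (X i), Y i⟫ - ∑ i, ⟪A (X i), X i⟫ = ∑ i, ⟪A (X i), w i⟫ := by
    rw [← Finset.sum_sub_distrib]
    apply Finset.sum_congr rfl
    intro i _
    rw [hwdef, inner_sub_right]
  rw [hsplit]
  have hA0 : (0:ℝ) ≤ ‖A‖ := norm_nonneg _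
  calc |∑ i, ⟪A (X i), w i⟫| ≤ ∑ i, |⟪A (X i), w i⟫| := Finset.abs_sum_le_sum_abs _ _
    _ ≤ ∑ _i : Fin n, (‖A‖ * (5 / 4)) * (σ * n * (5 / 2)) := by
        apply Finset.sum_le_sum
        intro i _
        calc |⟪A (X i), w i⟫| ≤ ‖A (X i)‖ * ‖w i‖ := abs_real_inner_le_norm _ _
          _ ≤ (‖A‖ * (5 / 4)) * (σ * n * (5 / 2)) := by
              apply mul_le_mul _ (hwfin i) (norm_nonneg _) (by positivity)
              exact le_trans (A.le_opNorm _) (mul_le_mul_of_nonneg_left (hXnorm i) hA0)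
    _ = (25 / 8) * σ * (n : ℝ) ^ 2 * ‖A‖ := by simp [Finset.sum_const]; ring
    _ ≤ 4 * (n : ℝ) ^ 2 * σ * ‖A‖ := by
        have h : (0:ℝ) ≤ σ * (n : ℝ) ^ 2 * ‖A‖ := by positivity
        nlinarith
end

section
/- Let A be an n×n real matrix representing a linear map with respect to a σ-orthonormal basis X₁,…,Xₙ (i.e. |⟨Xᵢ, Xⱼ⟩ − δᵢⱼ| ≤ σ) of an inner product space V, where nσ < 1. Then for each row i, (1 − nσ)·Σⱼ |A_{i,j}| ≤ Σⱼ |⟨A Xᵢ, Xⱼ⟩| ≤ n‖A‖(1 + σ). -/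
open scoped RealInnerProductSpace

/-- Row estimate for a linear map written in a `σ`-orthonormal basis: if
`A Xᵢ = Σⱼ M i j • Xⱼ` and `n σ < 1`, then for every row `i`,
`(1 − nσ) Σⱼ |M i j| ≤ Σⱼ |⟨A Xᵢ, Xⱼ⟩| ≤ n ‖A‖ (1 + σ)`. -/
theorem stmt_3 {V : Type*} [NormedAddCommGroup V] [InnerProductSpace ℝ V]
    [FiniteDimensional ℝ V] (n : ℕ) (hn : Module.finrank ℝ V = n)
    (σ : ℝ) (hσ0 : 0 ≤ σ) (X : Fin n → V)
    (hX : ∀ i j : Fin n, |⟪X i, X j⟫ - (if i = j then (1 : ℝ) else 0)| ≤ σ)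
    (hσn : (n : ℝ) * σ < 1)
    (A : V →L[ℝ] V) (M : Fin n → Fin n → ℝ)
    (hM : ∀ i : Fin n, A (X i) = ∑ j : Fin n, M i j • X j) :
    ∀ i : Fin n,
      (1 - (n : ℝ) * σ) * ∑ j : Fin n, |M i j| ≤ ∑ j : Fin n, |⟪A (X i), X j⟫| ∧
      ∑ j : Fin n, |⟪A (X i), X j⟫| ≤ (n : ℝ) * ‖A‖ * (1 + σ) := by
  intro i
  have hnorm : ∀ j : Fin n, ‖X j‖ ^ 2 ≤ 1 + σ := by
    intro j
    have h := hX j j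
    rw [if_pos rfl] at h
    have h2 : ⟪X j, X j⟫ ≤ 1 + σ := by
      have := abs_le.1 h
      linarith [this.2]
    rw [real_inner_self_eq_norm_sq] at h2
    linarith
  have hinner : ∀ j : Fin n, ⟪A (X i), X j⟫ = ∑ k : Fin n, M i k * ⟪X k, X j⟫ := by
    intro j
    rw [hM i, sum_inner]
    simp [real_inner_smul_left]
  set S := ∑ k : Fin n, |M i k| with hS
  have hS0 : 0 ≤ S := Finset.sum_nonneg fun _ _ => abs_nonneg _
  constructor
  · -- lower bound
    have key : ∀ j : Fin n, |M i j| ≤ |⟪A (X i), X j⟫| + σ * S := by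
      intro j
      have hexp : M i j = ⟪A (X i), X j⟫ -
          ∑ k : Fin n, M i k * (⟪X k, X j⟫ - (if k = j then (1 : ℝ) else 0)) := by
        rw [hinner j]
        rw [← Finset.sum_sub_distrib]
        have : ∀ k ∈ Finset.univ, (M i k * ⟪X k, X j⟫ -
            M i k * (⟪X k, X j⟫ - (if k = j then (1 : ℝ) else 0)))
            = M i k * (if k = j then (1 : ℝ) else 0) := by
          intro k _; ring
        rw [Finset.sum_congr rfl this]
        simp
      have herr : |∑ k : Fin n, M i k * (⟪X k, X j⟫ - (if k = j then (1 : ℝ) else 0))|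
          ≤ σ * S := by
        calc |∑ k : Fin n, M i k * (⟪X k, X j⟫ - (if k = j then (1 : ℝ) else 0))|
            ≤ ∑ k : Fin n, |M i k * (⟪X k, X j⟫ - (if k = j then (1 : ℝ) else 0))| :=
              Finset.abs_sum_le_sum_abs _ _
          _ ≤ ∑ k : Fin n, |M i k| * σ := by
              apply Finset.sum_le_sum
              intro k _
              rw [abs_mul]
              exact mul_le_mul_of_nonneg_left (hX k j) (abs_nonneg _)
          _ = σ * S := by rw [← Finset.sum_mul, hS, mul_comm]
      calc |M i j| ≤ |⟪A (X i), X j⟫| +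
            |∑ k : Fin n, M i k * (⟪X k, X j⟫ - (if k = j then (1 : ℝ) else 0))| := by
            rw [hexp]; exact abs_sub _ _
        _ ≤ |⟪A (X i), X j⟫| + σ * S := by linarith
    have hsum : S ≤ (∑ j : Fin n, |⟪A (X i), X j⟫|) + (n : ℝ) * σ * S := by
      calc S = ∑ j : Fin n, |M i j| := hS
        _ ≤ ∑ j : Fin n, (|⟪A (X i), X j⟫| + σ * S) :=
            Finset.sum_le_sum fun j _ => key j
        _ = (∑ j : Fin n, |⟪A (X i), X j⟫|) + (n : ℝ) * σ * S := by
            rw [Finset.sum_add_distrib, Finset.sum_const]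
            simp [mul_assoc]
    nlinarith
  · -- upper bound
    have key : ∀ j : Fin n, |⟪A (X i), X j⟫| ≤ ‖A‖ * (1 + σ) := by
      intro j
      have h1 : |⟪A (X i), X j⟫| ≤ ‖A (X i)‖ * ‖X j‖ := abs_real_inner_le_norm _ _
      have h2 : ‖A (X i)‖ ≤ ‖A‖ * ‖X i‖ := A.le_opNorm _
      have h3 : ‖X i‖ * ‖X j‖ ≤ 1 + σ := by
        nlinarith [hnorm i, hnorm j, norm_nonneg (X i), norm_nonneg (X j)]
      calc |⟪A (X i), X j⟫| ≤ ‖A (X i)‖ * ‖X j‖ := h1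
        _ ≤ ‖A‖ * (‖X i‖ * ‖X j‖) := by
            rw [← mul_assoc]
            exact mul_le_mul_of_nonneg_right h2 (norm_nonneg _)
        _ ≤ ‖A‖ * (1 + σ) := mul_le_mul_of_nonneg_left h3 (norm_nonneg _)
    calc ∑ j : Fin n, |⟪A (X i), X j⟫| ≤ ∑ _j : Fin n, ‖A‖ * (1 + σ) :=
          Finset.sum_le_sum fun j _ => key j
      _ = (n : ℝ) * ‖A‖ * (1 + σ) := by
          rw [Finset.sum_const]; simp [mul_assoc]
end

section
/- Let (X, d) be a compact metric space, c, cₙ : X × X → [0, ∞) continuous with cₙ → c uniformly, μₙ ⇀ μ, νₙ ⇀ ν, γₙ ∈ Π(μₙ, νₙ) with γₙ ⇀ γ, and suppose φₙ, ψₙ are uniformly bounded L-Lipschitz functions with φₙ → φ, ψₙ → ψ uniformly and φₙ(x) + ψₙ(y) = cₙ(x, y) on the support of γₙ (γₙ-a.e.). Then ∫ φ dμ + ∫ ψ dν = ∫ c dγ, hence γ is an optimal plan and (φ, ψ) are optimal potentials for the cost c between μ and ν. -/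
/-! The pairing `(f, μ) ↦ ∫ f dμ` is jointly continuous for the uniform topology on bounded
continuous functions and the weak topology on probability measures, so the identities
`∫ φₙ dμₙ + ∫ ψₙ dνₙ = ∫ cₙ dγₙ`, obtained by integrating the a.e. equality against the coupling
`γₙ`, pass to the limit. The limit potentials remain admissible, so weak duality
`∫ φ' dμ + ∫ ψ' dν ≤ ∫ c dγ'` turns the limit identity into optimality of both `γ` and `(φ, ψ)`. -/

open MeasureTheory Filter
open scoped Topology NNReal

theorem Continuous.integrable_of_compactSpace {X : Type*} [TopologicalSpace X] [CompactSpace X]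
    [MeasurableSpace X] [OpensMeasurableSpace X] {f : X → ℝ} (hf : Continuous f)
    (μ : Measure X) [IsFiniteMeasure μ] : Integrable f μ :=
  hf.integrable_of_hasCompactSupport (HasCompactSupport.of_compactSpace f)

namespace BoundedContinuousFunction

variable {X : Type*} [TopologicalSpace X] [MeasurableSpace X] [OpensMeasurableSpace X]

theorem tendsto_integral_of_tendsto_of_tendsto {ι : Type*} {l : Filter ι}
    {F : ι → X →ᵇ ℝ} {f : X →ᵇ ℝ} {μs : ι → ProbabilityMeasure X} {μ : ProbabilityMeasure X}
    (hF : Tendsto F l (𝓝 f)) (hμ : Tendsto μs l (𝓝 μ)) :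
    Tendsto (fun i ↦ ∫ x, F i x ∂(μs i : Measure X)) l (𝓝 (∫ x, f x ∂(μ : Measure X))) := by
  have hdiff : Tendsto (fun i ↦ ∫ x, (F i - f) x ∂(μs i : Measure X)) l (𝓝 0) := by
    refine squeeze_zero_norm (fun i ↦ (F i - f).norm_integral_le_norm _) ?_
    simpa [dist_eq_norm] using (tendsto_iff_dist_tendsto_zero.mp hF)
  have hfixed := ProbabilityMeasure.tendsto_iff_forall_integral_tendsto.mp hμ f
  rw [← zero_add (∫ x, f x ∂(μ : Measure X))]
  refine (hdiff.add hfixed).congr fun i ↦ ?_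
  rw [← integral_add ((F i - f).integrable _) (f.integrable _)]
  simp only [coe_sub, Pi.sub_apply, sub_add_cancel]

theorem tendsto_integral_of_tendstoUniformly [CompactSpace X] {ι : Type*} {l : Filter ι}
    {F : ι → X → ℝ} {f : X → ℝ} (hF : ∀ i, Continuous (F i)) (hf : Continuous f)
    (hu : TendstoUniformly F f l) {μs : ι → ProbabilityMeasure X} {μ : ProbabilityMeasure X}
    (hμ : Tendsto μs l (𝓝 μ)) :
    Tendsto (fun i ↦ ∫ x, F i x ∂(μs i : Measure X)) l (𝓝 (∫ x, f x ∂(μ : Measure X))) :=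
  tendsto_integral_of_tendsto_of_tendsto
    (F := fun i ↦ mkOfCompact ⟨F i, hF i⟩) (f := mkOfCompact ⟨f, hf⟩)
    (tendsto_iff_tendstoUniformly.mpr hu) hμ

end BoundedContinuousFunction

section Coupling

variable {X Y : Type*} [MeasurableSpace X] [MeasurableSpace Y]
  {μ : Measure X} {ν : Measure Y} {γ : Measure (X × Y)}

theorem integral_add_integral_eq_of_map_fst_of_map_snd
    (h₁ : γ.map Prod.fst = μ) (h₂ : γ.map Prod.snd = ν) {f : X → ℝ} {g : Y → ℝ}
    (hf : Integrable f μ) (hg : Integrable g ν) :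
    ∫ x, f x ∂μ + ∫ y, g y ∂ν = ∫ p, f p.1 + g p.2 ∂γ := by
  subst h₁ h₂
  rw [integral_map measurable_fst.aemeasurable hf.aestronglyMeasurable,
    integral_map measurable_snd.aemeasurable hg.aestronglyMeasurable]
  exact (integral_add (hf.comp_measurable measurable_fst) (hg.comp_measurable measurable_snd)).symm

theorem integral_add_integral_le_integral_of_map_fst_of_map_snd
    (h₁ : γ.map Prod.fst = μ) (h₂ : γ.map Prod.snd = ν) {φ : X → ℝ} {ψ : Y → ℝ}
    {c : X × Y → ℝ} (hφ : Integrable φ μ) (hψ : Integrable ψ ν) (hc : Integrable c γ)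
    (hle : ∀ x y, φ x + ψ y ≤ c (x, y)) :
    ∫ x, φ x ∂μ + ∫ y, ψ y ∂ν ≤ ∫ p, c p ∂γ := by
  rw [integral_add_integral_eq_of_map_fst_of_map_snd h₁ h₂ hφ hψ]
  subst h₁ h₂
  exact integral_mono ((hφ.comp_measurable measurable_fst).add
    (hψ.comp_measurable measurable_snd)) hc fun p ↦ hle p.1 p.2

end Coupling

theorem stmt_9_general {X : Type*} [MetricSpace X] [CompactSpace X]
    [MeasurableSpace X] [BorelSpace X]
    (c : X × X → ℝ) (cn : ℕ → X × X → ℝ)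
    (hc : Continuous c) (hcn : ∀ n, Continuous (cn n))
    (hcu : TendstoUniformly cn c atTop)
    (μn νn : ℕ → ProbabilityMeasure X) (μ ν : ProbabilityMeasure X)
    (γn : ℕ → ProbabilityMeasure (X × X)) (γ : ProbabilityMeasure (X × X))
    (hμ : Tendsto μn atTop (𝓝 μ)) (hν : Tendsto νn atTop (𝓝 ν))
    (hγ : Tendsto γn atTop (𝓝 γ))
    (hmarg1 : ∀ n, (γn n : Measure (X × X)).map Prod.fst = (μn n : Measure X))
    (hmarg2 : ∀ n, (γn n : Measure (X × X)).map Prod.snd = (νn n : Measure X))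
    (L : ℝ≥0) (φ ψ : X → ℝ) (φn ψn : ℕ → X → ℝ)
    (hφLip : ∀ n, LipschitzWith L (φn n)) (hψLip : ∀ n, LipschitzWith L (ψn n))
    (hφu : TendstoUniformly φn φ atTop) (hψu : TendstoUniformly ψn ψ atTop)
    (hadm : ∀ n x y, φn n x + ψn n y ≤ cn n (x, y))
    (heq : ∀ n, ∀ᵐ p ∂(γn n : Measure (X × X)), φn n p.1 + ψn n p.2 = cn n p)
    (hγmarg1 : (γ : Measure (X × X)).map Prod.fst = (μ : Measure X))
    (hγmarg2 : (γ : Measure (X × X)).map Prod.snd = (ν : Measure X)) :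
    ((∫ x, φ x ∂(μ : Measure X)) + ∫ y, ψ y ∂(ν : Measure X)
        = ∫ p, c p ∂(γ : Measure (X × X))) ∧
    (∀ γ' : ProbabilityMeasure (X × X),
      (γ' : Measure (X × X)).map Prod.fst = (μ : Measure X) →
      (γ' : Measure (X × X)).map Prod.snd = (ν : Measure X) →
      ∫ p, c p ∂(γ : Measure (X × X)) ≤ ∫ p, c p ∂(γ' : Measure (X × X))) ∧
    (∀ φ' ψ' : X → ℝ, Continuous φ' → Continuous ψ' →
      (∀ x y, φ' x + ψ' y ≤ c (x, y)) →
      (∫ x, φ' x ∂(μ : Measure X)) + ∫ y, ψ' y ∂(ν : Measure X)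
        ≤ (∫ x, φ x ∂(μ : Measure X)) + ∫ y, ψ y ∂(ν : Measure X)) := by
  have hφn n := (hφLip n).continuous
  have hψn n := (hψLip n).continuous
  have hφc : Continuous φ := hφu.continuous (.of_forall hφn)
  have hψc : Continuous ψ := hψu.continuous (.of_forall hψn)
  have hpair n : ∫ x, φn n x ∂(μn n : Measure X) + ∫ y, ψn n y ∂(νn n : Measure X)
      = ∫ p, cn n p ∂(γn n : Measure (X × X)) := by
    rw [integral_add_integral_eq_of_map_fst_of_map_snd (hmarg1 n) (hmarg2 n)
      ((hφn n).integrable_of_compactSpace _) ((hψn n).integrable_of_compactSpace _)]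
    exact integral_congr_ae (heq n)
  have hlim : ∫ x, φ x ∂(μ : Measure X) + ∫ y, ψ y ∂(ν : Measure X)
      = ∫ p, c p ∂(γ : Measure (X × X)) :=
    tendsto_nhds_unique
      ((BoundedContinuousFunction.tendsto_integral_of_tendstoUniformly hφn hφc hφu hμ).add
        (BoundedContinuousFunction.tendsto_integral_of_tendstoUniformly hψn hψc hψu hν))
      ((BoundedContinuousFunction.tendsto_integral_of_tendstoUniformly hcn hc hcu hγ).congr
        fun n ↦ (hpair n).symm)
  have hadm_lim x y : φ x + ψ y ≤ c (x, y) :=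
    le_of_tendsto_of_tendsto' ((hφu.tendsto_at x).add (hψu.tendsto_at y))
      (hcu.tendsto_at (x, y)) fun n ↦ hadm n x y
  refine ⟨hlim, fun γ' h₁ h₂ ↦ ?_, fun φ' ψ' hφ' hψ' hadm' ↦ ?_⟩
  · exact hlim ▸ integral_add_integral_le_integral_of_map_fst_of_map_snd h₁ h₂
      (hφc.integrable_of_compactSpace _) (hψc.integrable_of_compactSpace _)
      (hc.integrable_of_compactSpace _) hadm_lim
  · exact hlim ▸ integral_add_integral_le_integral_of_map_fst_of_map_snd hγmarg1 hγmarg2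
      (hφ'.integrable_of_compactSpace _) (hψ'.integrable_of_compactSpace _)
      (hc.integrable_of_compactSpace _) hadm'

/-- Stability of optimal transport: with `cₙ → c` uniformly, `μₙ ⇀ μ`, `νₙ ⇀ ν`,
couplings `γₙ ∈ Π(μₙ, νₙ)` with `γₙ ⇀ γ`, and uniformly bounded `L`-Lipschitz
potentials `φₙ, ψₙ` converging uniformly to `φ, ψ`, admissible for `cₙ` and attaining
equality `γₙ`-a.e., one gets `∫φ dμ + ∫ψ dν = ∫ c dγ`; hence `γ` is an optimal plan
and `(φ, ψ)` are optimal potentials for the cost `c` between `μ` and `ν`. -/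
theorem stmt_9 {X : Type*} [MetricSpace X] [CompactSpace X]
    [MeasurableSpace X] [BorelSpace X]
    (c : X × X → ℝ) (cn : ℕ → X × X → ℝ)
    (hc : Continuous c) (hcn : ∀ n, Continuous (cn n))
    (hc0 : ∀ p, 0 ≤ c p) (hcn0 : ∀ n p, 0 ≤ cn n p)
    (hcu : TendstoUniformly cn c atTop)
    (μn νn : ℕ → ProbabilityMeasure X) (μ ν : ProbabilityMeasure X)
    (γn : ℕ → ProbabilityMeasure (X × X)) (γ : ProbabilityMeasure (X × X))
    (hμ : Tendsto μn atTop (𝓝 μ)) (hν : Tendsto νn atTop (𝓝 ν))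
    (hγ : Tendsto γn atTop (𝓝 γ))
    (hmarg1 : ∀ n, (γn n : Measure (X × X)).map Prod.fst = (μn n : Measure X))
    (hmarg2 : ∀ n, (γn n : Measure (X × X)).map Prod.snd = (νn n : Measure X))
    (L : ℝ≥0) (B : ℝ) (φ ψ : X → ℝ) (φn ψn : ℕ → X → ℝ)
    (hφLip : ∀ n, LipschitzWith L (φn n)) (hψLip : ∀ n, LipschitzWith L (ψn n))
    (hφB : ∀ n x, |φn n x| ≤ B) (hψB : ∀ n x, |ψn n x| ≤ B)
    (hφu : TendstoUniformly φn φ atTop) (hψu : TendstoUniformly ψn ψ atTop)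
    (hadm : ∀ n x y, φn n x + ψn n y ≤ cn n (x, y))
    (heq : ∀ n, ∀ᵐ p ∂(γn n : Measure (X × X)), φn n p.1 + ψn n p.2 = cn n p)
    (hγmarg1 : (γ : Measure (X × X)).map Prod.fst = (μ : Measure X))
    (hγmarg2 : (γ : Measure (X × X)).map Prod.snd = (ν : Measure X)) :
    ((∫ x, φ x ∂(μ : Measure X)) + ∫ y, ψ y ∂(ν : Measure X)
        = ∫ p, c p ∂(γ : Measure (X × X))) ∧
    (∀ γ' : ProbabilityMeasure (X × X),
      (γ' : Measure (X × X)).map Prod.fst = (μ : Measure X) →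
      (γ' : Measure (X × X)).map Prod.snd = (ν : Measure X) →
      ∫ p, c p ∂(γ : Measure (X × X)) ≤ ∫ p, c p ∂(γ' : Measure (X × X))) ∧
    (∀ φ' ψ' : X → ℝ, Continuous φ' → Continuous ψ' →
      (∀ x y, φ' x + ψ' y ≤ c (x, y)) →
      (∫ x, φ' x ∂(μ : Measure X)) + ∫ y, ψ' y ∂(ν : Measure X)
        ≤ (∫ x, φ x ∂(μ : Measure X)) + ∫ y, ψ y ∂(ν : Measure X)) :=
  stmt_9_general c cn hc hcn hcu μn νn μ ν γn γ hμ hν hγ hmarg1 hmarg2 L φ ψ φn ψn hφLip hψLip hφu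
    hψu hadm heq hγmarg1 hγmarg2
end
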